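/- The graph obtained from the 6-cycle on vertices 0,1,2,3,4,5 by adding a seventh vertex c adjacent exactly to the antipodal vertices 0 and 3 is irreducible. -/
import Mathlib


/-- `x ≈ y`: equal or adjacent. A reduction of `G` is a non-surjective map `f`
with `f x ≈ x` for all `x`, and `x ≈ y → f x ≈ f y`. -/
def SimpleGraph.IsReduction {V : Type*} (G : SimpleGraph V) (f : V → V) : Prop :=
  ¬ Function.Surjective f ∧
  (∀ x, f x = x ∨ G.Adj (f x) x) ∧
  (∀ x y, (x = y ∨ G.Adj x y) → (f x = f y ∨ G.Adj (f x) (f y)))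

/-- A graph is reducible if it admits a reduction. -/
def SimpleGraph.Reducible {V : Type*} (G : SimpleGraph V) : Prop :=
  ∃ f : V → V, G.IsReduction f

/-- The cycle graph on `ZMod n`. -/
def cycleGraph (n : ℕ) : SimpleGraph (ZMod n) :=
  SimpleGraph.fromRel (fun x y => y = x + 1)

/-- 6-cycle with extra vertex `none` adjacent to the antipodal vertices 0 and 3. -/
def c6PlusVertex : SimpleGraph (Option (ZMod 6)) :=
  SimpleGraph.fromRel (fun x y =>
    match x, y with
    | some a, some b => b = a + 1
    | some a, none => a = 0 ∨ a = 3
    | none, _ => False)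

instance : DecidableRel c6PlusVertex.Adj := fun x y => by
  unfold c6PlusVertex
  rw [SimpleGraph.fromRel_adj]
  cases x <;> cases y <;> dsimp <;> infer_instance

/-- `Close u v`: `u = v` or adjacent. -/
def c6Close (u v : Option (ZMod 6)) : Prop := u = v ∨ c6PlusVertex.Adj u v

instance : DecidableRel c6Close := fun _ _ => by unfold c6Close; infer_instance

set_option synthInstance.maxSize 4000 in
set_option synthInstance.maxHeartbeats 1000000 in
set_option maxHeartbeats 4000000 in
lemma c6_aux : ∀ v0 : Option (ZMod 6), c6Close v0 (some 0) →
    ∀ v1, c6Close v1 (some 1) → c6Close v0 v1 →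
    ∀ v2, c6Close v2 (some 2) → c6Close v1 v2 →
    ∀ v3, c6Close v3 (some 3) → c6Close v2 v3 →
    ∀ v4, c6Close v4 (some 4) → c6Close v3 v4 →
    ∀ v5, c6Close v5 (some 5) → c6Close v4 v5 → c6Close v5 v0 →
    ∀ vc, c6Close vc none → c6Close vc v0 → c6Close vc v3 →
    ∀ z : Option (ZMod 6),
      z = v0 ∨ z = v1 ∨ z = v2 ∨ z = v3 ∨ z = v4 ∨ z = v5 ∨ z = vc := by
  decide

theorem c6PlusVertex_irreducible : ¬ c6PlusVertex.Reducible := by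
  rintro ⟨f, hns, hfix, hadj⟩
  have close_fix : ∀ x, c6Close (f x) x := fun x => hfix x
  have close_adj : ∀ x y, c6PlusVertex.Adj x y → c6Close (f x) (f y) :=
    fun x y h => hadj x y (Or.inr h)
  have adj : ∀ x y, (match x, y with
      | some a, some b => b = a + 1
      | some a, none => a = 0 ∨ a = 3
      | none, _ => False) → x ≠ y → c6PlusVertex.Adj x y := by
    intro x y h hne
    unfold c6PlusVertex
    rw [SimpleGraph.fromRel_adj]
    exact ⟨hne, Or.inl h⟩
  have e01 : c6Close (f (some 0)) (f (some 1)) := close_adj _ _ (adj _ _ rfl (by decide))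
  have e12 : c6Close (f (some 1)) (f (some 2)) := close_adj _ _ (adj _ _ rfl (by decide))
  have e23 : c6Close (f (some 2)) (f (some 3)) := close_adj _ _ (adj _ _ rfl (by decide))
  have e34 : c6Close (f (some 3)) (f (some 4)) := close_adj _ _ (adj _ _ rfl (by decide))
  have e45 : c6Close (f (some 4)) (f (some 5)) := close_adj _ _ (adj _ _ rfl (by decide))
  have e50 : c6Close (f (some 5)) (f (some 0)) := close_adj _ _ (adj _ _ rfl (by decide))
  have ec0 : c6Close (f none) (f (some 0)) := by
    have : c6PlusVertex.Adj (some 0) none := adj _ _ (Or.inl rfl) (by simp)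
    have h := close_adj _ _ this
    rcases h with h | h
    · exact Or.inl h.symm
    · exact Or.inr h.symm
  have ec3 : c6Close (f none) (f (some 3)) := by
    have : c6PlusVertex.Adj (some 3) none := adj _ _ (Or.inr rfl) (by simp)
    have h := close_adj _ _ this
    rcases h with h | h
    · exact Or.inl h.symm
    · exact Or.inr h.symm
  rw [Function.Surjective] at hns
  push_neg at hns
  obtain ⟨z, hz⟩ := hns
  have := c6_aux (f (some 0)) (close_fix _) (f (some 1)) (close_fix _) e01
    (f (some 2)) (close_fix _) e12 (f (some 3)) (close_fix _) e23
    (f (some 4)) (close_fix _) e34 (f (some 5)) (close_fix _) e45 e50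
    (f none) (close_fix _) ec0 ec3 z
  rcases this with h|h|h|h|h|h|h <;> exact hz _ h.symm
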